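/- arXiv:1507.06400 — 2 statements merged into one kernel-verified Lean document; each statement's English description precedes it below -/
import Mathlib

section
/- For all parameters α > 0, λ > 0, c > 0, β > 0, the OGE-G probability density function f(x; α, λ, c, β) integrates to 1 over (0, ∞): ∫₀^∞ α β λ e^{c x} · exp((λ/c)·(e^{c x} - 1)) · exp(-α·(exp((λ/c)·(e^{c x} - 1)) - 1)) · (1 - exp(-α·(exp((λ/c)·(e^{c x} - 1)) - 1)))^{β - 1} dx = 1. -/
/-!
The OGE-G density is the derivative of the distribution function
`F x = (1 - exp (-α * (exp (lam / c * (exp (c * x) - 1)) - 1))) ^ β`,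
which vanishes at `0`, tends to `1` at infinity and is monotone on `(0, ∞)`, so
the fundamental theorem of calculus on `(0, ∞)` gives total mass `F ∞ - F 0 = 1`.
-/

open Real MeasureTheory Set Filter Topology

/-- The probability density function of the OGE-G distribution. -/
noncomputable def ogeG_pdf (α lam c β x : ℝ) : ℝ :=
  α * β * lam * Real.exp (c * x) * Real.exp (lam / c * (Real.exp (c * x) - 1)) *
    Real.exp (-α * (Real.exp (lam / c * (Real.exp (c * x) - 1)) - 1)) *
    (1 - Real.exp (-α * (Real.exp (lam / c * (Real.exp (c * x) - 1)) - 1))) ^ (β - 1)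

/-- The odds `G / (1 - G)` of the Gompertz distribution function
`G x = 1 - exp (-(lam / c) * (exp (c * x) - 1))`. -/
noncomputable def gompertzOdds (lam c x : ℝ) : ℝ :=
  exp (lam / c * (exp (c * x) - 1)) - 1

noncomputable def ogeG_cdf (α lam c β x : ℝ) : ℝ :=
  (1 - exp (-α * gompertzOdds lam c x)) ^ β

section Gompertz

variable {lam c : ℝ}

theorem gompertzOdds_zero (lam c : ℝ) : gompertzOdds lam c 0 = 0 := by
  simp [gompertzOdds]

theorem hasDerivAt_gompertzOdds (hc : c ≠ 0) (x : ℝ) :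
    HasDerivAt (gompertzOdds lam c)
      (lam * exp (c * x) * exp (lam / c * (exp (c * x) - 1))) x := by
  have hexp : HasDerivAt (fun x => exp (c * x)) (exp (c * x) * c) x :=
    ((hasDerivAt_id x).const_mul c).exp.congr_deriv (by simp)
  have hexponent : HasDerivAt (fun x => lam / c * (exp (c * x) - 1)) (lam * exp (c * x)) x :=
    ((hexp.sub_const 1).const_mul (lam / c)).congr_deriv (by field_simp)
  exact (hexponent.exp.sub_const 1).congr_deriv (by ring)

theorem gompertzOdds_pos (hlam : 0 < lam) (hc : 0 < c) {x : ℝ} (hx : 0 < x) :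
    0 < gompertzOdds lam c x :=
  sub_pos.2 <| one_lt_exp_iff.2 <|
    mul_pos (div_pos hlam hc) (sub_pos.2 (one_lt_exp_iff.2 (mul_pos hc hx)))

theorem tendsto_gompertzOdds_atTop (hlam : 0 < lam) (hc : 0 < c) :
    Tendsto (gompertzOdds lam c) atTop atTop := by
  have hexp : Tendsto (fun x => exp (c * x)) atTop atTop :=
    tendsto_exp_atTop.comp (tendsto_id.const_mul_atTop hc)
  exact tendsto_atTop_add_const_right _ (-1) <| tendsto_exp_atTop.comp <|
    (tendsto_atTop_add_const_right _ (-1) hexp).const_mul_atTop (div_pos hlam hc)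

end Gompertz

section OGEG

variable {α lam c β : ℝ}

theorem one_sub_exp_neg_mul_gompertzOdds_pos (hα : 0 < α) (hlam : 0 < lam) (hc : 0 < c)
    {x : ℝ} (hx : 0 < x) : 0 < 1 - exp (-α * gompertzOdds lam c x) :=
  sub_pos.2 <| exp_lt_one_iff.2 <| mul_neg_of_neg_of_pos (neg_neg_of_pos hα)
    (gompertzOdds_pos hlam hc hx)

theorem ogeG_pdf_nonneg (hα : 0 < α) (hlam : 0 < lam) (hc : 0 < c) (hβ : 0 ≤ β)
    {x : ℝ} (hx : 0 < x) : 0 ≤ ogeG_pdf α lam c β x := by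
  have hbase := one_sub_exp_neg_mul_gompertzOdds_pos hα hlam hc hx
  unfold gompertzOdds at hbase
  unfold ogeG_pdf
  positivity

theorem hasDerivAt_ogeG_cdf (hα : 0 < α) (hlam : 0 < lam) (hc : 0 < c) {x : ℝ} (hx : 0 < x) :
    HasDerivAt (ogeG_cdf α lam c β) (ogeG_pdf α lam c β x) x := by
  have hderiv_base :=
    (((hasDerivAt_gompertzOdds (lam := lam) hc.ne' x).const_mul (-α)).exp).const_sub 1
  refine (hderiv_base.rpow_const (p := β)
    (Or.inl (one_sub_exp_neg_mul_gompertzOdds_pos hα hlam hc hx).ne')).congr_deriv ?_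
  simp only [ogeG_pdf, gompertzOdds]
  ring

theorem continuous_ogeG_cdf (hβ : 0 ≤ β) : Continuous (ogeG_cdf α lam c β) := by
  unfold ogeG_cdf gompertzOdds
  exact Continuous.rpow_const (by fun_prop) fun _ => Or.inr hβ

theorem ogeG_cdf_zero (hβ : β ≠ 0) : ogeG_cdf α lam c β 0 = 0 := by
  simp [ogeG_cdf, gompertzOdds_zero, zero_rpow hβ]

theorem tendsto_ogeG_cdf_atTop (hα : 0 < α) (hlam : 0 < lam) (hc : 0 < c) :
    Tendsto (ogeG_cdf α lam c β) atTop (𝓝 1) := by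
  have hbase : Tendsto (fun x => 1 - exp (-α * gompertzOdds lam c x)) atTop (𝓝 1) := by
    simpa using tendsto_const_nhds.sub <| tendsto_exp_atBot.comp <|
      (tendsto_gompertzOdds_atTop hlam hc).const_mul_atTop_of_neg (neg_neg_of_pos hα)
  have hpow : Tendsto (· ^ β) (𝓝 (1 : ℝ)) (𝓝 1) := by
    simpa using (continuousAt_rpow_const 1 β (Or.inl one_ne_zero)).tendsto
  exact hpow.comp hbase

end OGEG

/-- The OGE-G probability density function integrates to `1` over `(0, ∞)`. -/
theorem ogeG_pdf_integral_eq_one (α lam c β : ℝ)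
    (hα : 0 < α) (hlam : 0 < lam) (hc : 0 < c) (hβ : 0 < β) :
    ∫ x in Set.Ioi (0 : ℝ), ogeG_pdf α lam c β x = 1 := by
  rw [integral_Ioi_of_hasDerivAt_of_nonneg (continuous_ogeG_cdf hβ.le).continuousWithinAt
      (fun x hx => hasDerivAt_ogeG_cdf hα hlam hc hx)
      (fun x hx => ogeG_pdf_nonneg hα hlam hc hβ.le hx) (tendsto_ogeG_cdf_atTop hα hlam hc),
    ogeG_cdf_zero hβ.ne', sub_zero]
end

section
/- For all parameters α > 0, λ > 0, c > 0, β > 0 and x > 0, the derivative of the OGE-G probability density function f vanishes at x if and only if x satisfies the mode equation: (c + λ e^{c x} - α λ e^{c x} · exp((λ/c)·(e^{c x} - 1)))·(1 - exp(-α·(exp((λ/c)·(e^{c x} - 1)) - 1))) + α λ (β - 1) e^{c x} · exp((λ/c)·(e^{c x} - 1)) · exp(-α·(exp((λ/c)·(e^{c x} - 1)) - 1)) = 0. -/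
/-!
The density is positive, so `f' = 0` exactly where `(log f)' = 0`. Write `H` for the Gompertz
cumulative hazard and `C = exp (-α (exp H - 1))`; then `f` is a product of exponentials and the real
power `(1 - C) ^ (β - 1)`, so its logarithmic derivative is
`c + λ e^{cx} - αλ e^{cx} e^H + (β - 1) αλ e^{cx} e^H C / (1 - C)`.
Since `0 < 1 - C` for `x > 0`, clearing this denominator gives the mode equation.
-/

open Real

theorem HasDerivAt.rpow_const_of_pos {f : ℝ → ℝ} {f' x : ℝ} (p : ℝ) (hf : HasDerivAt f f' x)
    (hfx : 0 < f x) : HasDerivAt (fun y => f y ^ p) (f x ^ p * (p * f' / f x)) x := by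
  convert hf.rpow_const (p := p) (Or.inl hfx.ne') using 1
  rw [rpow_sub_one hfx.ne']
  ring

noncomputable def gompertzCumHazard (lam c x : ℝ) : ℝ := lam / c * (exp (c * x) - 1)

/-- `(1 - ogeG_expTerm α lam c x) ^ β` is the OGE-G distribution function. -/
noncomputable def ogeG_expTerm (α lam c x : ℝ) : ℝ :=
  exp (-α * (exp (gompertzCumHazard lam c x) - 1))

noncomputable def ogeG_logDeriv (α lam c β x : ℝ) : ℝ :=
  c + lam * exp (c * x) - α * lam * exp (c * x) * exp (gompertzCumHazard lam c x) +
    α * lam * (β - 1) * exp (c * x) * exp (gompertzCumHazard lam c x) * ogeG_expTerm α lam c x /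
      (1 - ogeG_expTerm α lam c x)

section

variable {α lam c β x : ℝ}

theorem hasDerivAt_gompertzCumHazard (hc : c ≠ 0) :
    HasDerivAt (gompertzCumHazard lam c) (lam * exp (c * x)) x := by
  refine ((((hasDerivAt_id' x).const_mul c).exp.sub_const 1).const_mul (lam / c)).congr_deriv ?_
  field_simp

theorem hasDerivAt_ogeG_expTerm (hc : c ≠ 0) :
    HasDerivAt (ogeG_expTerm α lam c)
      (ogeG_expTerm α lam c x *
        (-α * (exp (gompertzCumHazard lam c x) * (lam * exp (c * x))))) x :=
  (((hasDerivAt_gompertzCumHazard hc).exp.sub_const 1).const_mul (-α)).exp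

theorem ogeG_expTerm_lt_one (hα : 0 < α) (hlam : 0 < lam) (hc : 0 < c) (hx : 0 < x) :
    ogeG_expTerm α lam c x < 1 := by
  have hH : 0 < gompertzCumHazard lam c x :=
    mul_pos (div_pos hlam hc) (sub_pos.mpr (one_lt_exp_iff.mpr (mul_pos hc hx)))
  exact exp_lt_one_iff.mpr
    (mul_neg_of_neg_of_pos (neg_neg_of_pos hα) (sub_pos.mpr (one_lt_exp_iff.mpr hH)))

theorem ogeG_pdf_eq (α lam c β x : ℝ) :
    ogeG_pdf α lam c β x = α * β * lam * exp (c * x) * exp (gompertzCumHazard lam c x) *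
      ogeG_expTerm α lam c x * (1 - ogeG_expTerm α lam c x) ^ (β - 1) :=
  rfl

theorem ogeG_pdf_pos (hα : 0 < α) (hlam : 0 < lam) (hβ : 0 < β)
    (hC : ogeG_expTerm α lam c x < 1) : 0 < ogeG_pdf α lam c β x := by
  rw [ogeG_pdf_eq]
  exact mul_pos (by unfold ogeG_expTerm; positivity) (rpow_pos_of_pos (sub_pos.mpr hC) _)

theorem hasDerivAt_ogeG_pdf (hc : c ≠ 0) (hC : ogeG_expTerm α lam c x < 1) :
    HasDerivAt (ogeG_pdf α lam c β) (ogeG_pdf α lam c β x * ogeG_logDeriv α lam c β x) x := by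
  have hE := ((hasDerivAt_id' x).const_mul c).exp.const_mul (α * β * lam)
  have hG := (hasDerivAt_gompertzCumHazard (lam := lam) (x := x) hc).exp
  have hC' := hasDerivAt_ogeG_expTerm (α := α) (lam := lam) (x := x) hc
  have hD := (hC'.const_sub 1).rpow_const_of_pos (β - 1) (sub_pos.mpr hC)
  refine (((hE.mul hG).mul hC').mul hD).congr_deriv ?_
  simp only [ogeG_pdf_eq, ogeG_logDeriv, Pi.mul_apply]
  ring

theorem ogeG_logDeriv_eq_zero_iff (hC : ogeG_expTerm α lam c x < 1) :
    ogeG_logDeriv α lam c β x = 0 ↔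
      (c + lam * exp (c * x) - α * lam * exp (c * x) * exp (gompertzCumHazard lam c x)) *
          (1 - ogeG_expTerm α lam c x) +
        α * lam * (β - 1) * exp (c * x) * exp (gompertzCumHazard lam c x) *
          ogeG_expTerm α lam c x = 0 := by
  have h1C : 1 - ogeG_expTerm α lam c x ≠ 0 := (sub_pos.mpr hC).ne'
  rw [← mul_left_inj' h1C, zero_mul, ogeG_logDeriv]
  congr! 1
  field_simp

end

/-- For `x > 0`, the derivative of the OGE-G pdf vanishes at `x` if and only if
`x` satisfies the mode equation (9). -/
theorem ogeG_mode_equation (α lam c β : ℝ)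
    (hα : 0 < α) (hlam : 0 < lam) (hc : 0 < c) (hβ : 0 < β)
    (x : ℝ) (hx : 0 < x) :
    deriv (ogeG_pdf α lam c β) x = 0 ↔
      (c + lam * Real.exp (c * x) -
        α * lam * Real.exp (c * x) * Real.exp (lam / c * (Real.exp (c * x) - 1))) *
        (1 - Real.exp (-α * (Real.exp (lam / c * (Real.exp (c * x) - 1)) - 1))) +
      α * lam * (β - 1) * Real.exp (c * x) *
        Real.exp (lam / c * (Real.exp (c * x) - 1)) *
        Real.exp (-α * (Real.exp (lam / c * (Real.exp (c * x) - 1)) - 1)) = 0 := by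
  have hC := ogeG_expTerm_lt_one hα hlam hc hx
  rw [(hasDerivAt_ogeG_pdf (β := β) hc.ne' hC).deriv, mul_eq_zero,
    or_iff_right (ogeG_pdf_pos hα hlam hβ hC).ne']
  exact ogeG_logDeriv_eq_zero_iff hC
end
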